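/- Let r ≥ 2, k ≥ 1, R ∈ ℂ[z] nonzero, P(z) = z^r·R(z^k), Q(z) = z^r·R(z)^k, n ≥ 1, and let z₀ ≠ 0 with P^{∘n}(z₀) = z₀. Then the order of vanishing of Q^{∘n}(z) − z at z = z₀^k equals the order of vanishing of P^{∘n}(z) − z at z = z₀. -/
import Mathlib


open Polynomial

/-- The `n`-th compositional iterate of a polynomial. -/
noncomputable def polyIter (φ : Polynomial ℂ) (n : ℕ) : Polynomial ℂ :=
  (fun q => φ.comp q)^[n] Polynomial.X

lemma polyIter_zero (φ : Polynomial ℂ) : polyIter φ 0 = X := rfl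

lemma polyIter_succ (φ : Polynomial ℂ) (n : ℕ) :
    polyIter φ (n + 1) = φ.comp (polyIter φ n) := by
  unfold polyIter
  rw [Function.iterate_succ_apply']

lemma iter_comp (r k : ℕ) (R : Polynomial ℂ) (n : ℕ) :
    (polyIter (X ^ r * R ^ k) n).comp (X ^ k)
      = (polyIter (X ^ r * R.comp (X ^ k)) n) ^ k := by
  induction n with
  | zero => simp [polyIter_zero]
  | succ n ih =>
    rw [polyIter_succ, polyIter_succ, Polynomial.comp_assoc, ih]
    simp only [mul_comp, pow_comp, X_comp, Polynomial.comp_assoc]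
    ring

/-- The multiplicity of `z₀^k` as a fixed point of `Q^{∘n}` equals the
multiplicity of `z₀ ≠ 0` as a fixed point of `P^{∘n}`, where
`P(z) = z^r·R(z^k)` and `Q(z) = z^r·R(z)^k`. -/
theorem stmt13 (r k : ℕ) (hr : 2 ≤ r) (hk : 1 ≤ k) (R : Polynomial ℂ) (hR : R ≠ 0)
    (n : ℕ) (hn : 1 ≤ n) (z₀ : ℂ) (hz₀ : z₀ ≠ 0)
    (hfix : (polyIter (X ^ r * R.comp (X ^ k)) n).eval z₀ = z₀) :
    (polyIter (X ^ r * R ^ k) n - X).rootMultiplicity (z₀ ^ k)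
      = (polyIter (X ^ r * R.comp (X ^ k)) n - X).rootMultiplicity z₀ := by
  set A := polyIter (X ^ r * R.comp (X ^ k)) n with hAdef
  set B := polyIter (X ^ r * R ^ k) n with hBdef
  have hkz : (k : ℂ) * z₀ ^ (k - 1) ≠ 0 :=
    mul_ne_zero (Nat.cast_ne_zero.2 (by omega)) (pow_ne_zero _ hz₀)
  -- the geometric sum factor S with S * (A - X) = A^k - X^k
  set S : Polynomial ℂ := ∑ i ∈ Finset.range k, A ^ i * X ^ (k - 1 - i) with hSdef
  have hS : S * (A - X) = A ^ k - X ^ k := geom_sum₂_mul A X k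
  have hSe : S.eval z₀ = (k : ℂ) * z₀ ^ (k - 1) := by
    rw [hSdef, eval_finset_sum]
    have : ∀ i ∈ Finset.range k, (A ^ i * X ^ (k - 1 - i)).eval z₀ = z₀ ^ (k - 1) := by
      intro i hi
      rw [Finset.mem_range] at hi
      rw [eval_mul, eval_pow, eval_pow, eval_X, hfix, ← pow_add]
      congr 1
      omega
    rw [Finset.sum_congr rfl this, Finset.sum_const, Finset.card_range, nsmul_eq_mul]
  have hSne : S.eval z₀ ≠ 0 := by rw [hSe]; exact hkz
  have hS0 : S ≠ 0 := fun h => hSne (by simp [h])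
  -- key composition identity
  have hcomp : (B - X).comp (X ^ k) = S * (A - X) := by
    rw [sub_comp, X_comp, hS, hBdef, iter_comp, ← hAdef]
  by_cases hAX : A - X = 0
  · have hBX : B - X = 0 := by
      have h0 : (B - X).comp (X ^ k) = 0 := by rw [hcomp, hAX, mul_zero]
      rcases (comp_eq_zero_iff).1 h0 with h | ⟨_, h⟩
      · exact h
      · exfalso
        have h2 := congrArg natDegree h
        rw [natDegree_X_pow, natDegree_C] at h2
        omega
    rw [hAX, hBX]
    simp
  · -- main case
    have hAXe : (A - X).eval z₀ = 0 := by simp [hfix]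
    have hBX : B - X ≠ 0 := by
      intro h
      rw [h, zero_comp] at hcomp
      exact hAX (by
        rcases mul_eq_zero.1 hcomp.symm with h' | h'
        · exact absurd h' hS0
        · exact h')
    set w := z₀ ^ k with hw
    set m := (B - X).rootMultiplicity w with hm
    obtain ⟨u, hu, hund⟩ := (B - X).exists_eq_pow_rootMultiplicity_mul_and_not_dvd hBX w
    have hue : u.eval w ≠ 0 := fun h => hund (dvd_iff_isRoot.2 h)
    -- factor X^k - C w = T * (X - C z₀)
    set T : Polynomial ℂ := ∑ i ∈ Finset.range k, X ^ i * (C z₀) ^ (k - 1 - i) with hTdef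
    have hT : T * (X - C z₀) = X ^ k - C w := by
      rw [hw, C_pow]; exact geom_sum₂_mul X (C z₀) k
    have hTe : T.eval z₀ = (k : ℂ) * z₀ ^ (k - 1) := by
      rw [hTdef, eval_finset_sum]
      have : ∀ i ∈ Finset.range k, (X ^ i * (C z₀) ^ (k - 1 - i)).eval z₀ = z₀ ^ (k - 1) := by
        intro i hi
        rw [Finset.mem_range] at hi
        rw [eval_mul, eval_pow, eval_pow, eval_X, eval_C, ← pow_add]
        congr 1
        omega
      rw [Finset.sum_congr rfl this, Finset.sum_const, Finset.card_range, nsmul_eq_mul]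
    have hTne : T.eval z₀ ≠ 0 := by rw [hTe]; exact hkz
    have hT0 : T ≠ 0 := fun h => hTne (by simp [h])
    -- rewrite the composition using the factorization
    have hfac : (B - X).comp (X ^ k)
        = T ^ m * ((X - C z₀) ^ m * u.comp (X ^ k)) := by
      rw [hu, ← hm, mul_comp, pow_comp, sub_comp, X_comp, C_comp, ← hT,
        mul_pow, mul_assoc]
    have hucomp_e : (u.comp (X ^ k)).eval z₀ ≠ 0 := by
      rw [eval_comp, eval_pow, eval_X, ← hw]; exact hue
    have hucomp0 : u.comp (X ^ k) ≠ 0 := fun h => hucomp_e (by simp [h])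
    -- compute rootMultiplicity of both sides of hfac rewritten via hcomp
    have key : S * (A - X) = T ^ m * ((X - C z₀) ^ m * u.comp (X ^ k)) := by
      rw [← hcomp, hfac]
    have hXz : (X - C z₀ : Polynomial ℂ) ≠ 0 := X_sub_C_ne_zero z₀
    have hlhs_ne : S * (A - X) ≠ 0 := mul_ne_zero hS0 hAX
    have e1 : rootMultiplicity z₀ (S * (A - X))
        = rootMultiplicity z₀ (A - X) := by
      rw [rootMultiplicity_mul hlhs_ne, rootMultiplicity_eq_zero (by exact hSne), zero_add]
    have hrhs_ne : T ^ m * ((X - C z₀) ^ m * u.comp (X ^ k)) ≠ 0 :=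
      mul_ne_zero (pow_ne_zero _ hT0) (mul_ne_zero (pow_ne_zero _ hXz) hucomp0)
    have hTm : ¬ IsRoot (T ^ m) z₀ := by
      rw [IsRoot, eval_pow]; exact pow_ne_zero _ hTne
    have e2 : rootMultiplicity z₀ (T ^ m * ((X - C z₀) ^ m * u.comp (X ^ k))) = m := by
      rw [rootMultiplicity_mul hrhs_ne,
        rootMultiplicity_mul (mul_ne_zero (pow_ne_zero _ hXz) hucomp0),
        rootMultiplicity_X_sub_C_pow,
        rootMultiplicity_eq_zero hTm,
        rootMultiplicity_eq_zero hucomp_e, zero_add, add_zero]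
    have hfin : rootMultiplicity z₀ (A - X) = m := by rw [← e1, key, e2]
    exact hm.symm.trans hfin.symm
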